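/- arXiv:1603.03683 — 2 statements merged into one kernel-verified Lean document; each statement's English description precedes it below -/
import Mathlib

section
/- Let (Ω, F, P) be a probability space, R > 1, B ≥ 1, and σ : Ω → ℕ a random variable with E[R^σ] ≤ B. Let θ > 0, M > 0 with 3θM ≤ log R, (Y_t) random variables with |Y_t| ≤ M pointwise, and Λ ∈ ℝ with |Λ| ≤ M. Then E[exp(θ ∑_{t=0}^{σ} (Y_t − Λ))] ≥ 1/(R·B). -/
/-!
Every increment satisfies `Y_t - Λ ≥ -2M`, so pointwise
`exp (θ ∑_{t ≤ σ} (Y_t - Λ)) ≥ exp (-2θM (σ + 1)) ≥ R^{-(σ+1)}` because `2θM ≤ log R`.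
Integrating, the Cauchy–Schwarz (harmonic–arithmetic mean) inequality
`E[1/X] ≥ 1/E[X]` applied to `X = R^σ` gives `E[R^{-σ}] ≥ 1/B`.
-/

open MeasureTheory Real Finset
open scoped ENNReal

theorem ENNReal.inv_lintegral_le_lintegral_inv {Ω : Type*} [MeasurableSpace Ω] {μ : Measure Ω}
    [IsProbabilityMeasure μ] {f : Ω → ℝ≥0∞} (hf : AEMeasurable f μ)
    (h0 : ∀ᵐ ω ∂μ, f ω ≠ 0) (htop : ∀ᵐ ω ∂μ, f ω ≠ ∞) :
    (∫⁻ ω, f ω ∂μ)⁻¹ ≤ ∫⁻ ω, (f ω)⁻¹ ∂μ := by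
  have hhalf : (0 : ℝ) ≤ 2⁻¹ := by norm_num
  have hone : ∫⁻ ω, f ω ^ (2⁻¹ : ℝ) * (f ω)⁻¹ ^ (2⁻¹ : ℝ) ∂μ = 1 := by
    rw [lintegral_congr_ae (g := fun _ ↦ 1), lintegral_const, measure_univ, mul_one]
    filter_upwards [h0, htop] with ω hω0 hωtop
    rw [← ENNReal.mul_rpow_of_nonneg _ _ hhalf, ENNReal.mul_inv_cancel hω0 hωtop,
      ENNReal.one_rpow]
  have hCS := lintegral_mul_norm_pow_le hf hf.inv hhalf hhalf (by norm_num)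
  simp only [Pi.inv_apply] at hCS
  rw [hone, ← ENNReal.mul_rpow_of_nonneg _ _ hhalf, ENNReal.le_rpow_inv_iff two_pos,
    one_rpow] at hCS
  set I := ∫⁻ ω, f ω ∂μ
  calc I⁻¹ ≤ I⁻¹ * (I * ∫⁻ ω, (f ω)⁻¹ ∂μ) := le_mul_of_one_le_right' hCS
    _ = I * I⁻¹ * ∫⁻ ω, (f ω)⁻¹ ∂μ := by ring
    _ ≤ ∫⁻ ω, (f ω)⁻¹ ∂μ := mul_le_of_le_one_left' (ENNReal.mul_inv_le_one I)

theorem inv_pow_le_exp_mul_sum {R θ c : ℝ} (hR : 0 < R) (hθ : 0 ≤ θ) (hc : θ * c ≤ log R)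
    {x : ℕ → ℝ} (hx : ∀ t, -c ≤ x t) (m : ℕ) :
    (R ^ m)⁻¹ ≤ exp (θ * ∑ t ∈ range m, x t) := by
  have hsum : m * -c ≤ ∑ t ∈ range m, x t := by
    simpa using card_nsmul_le_sum (range m) x (-c) fun t _ ↦ hx t
  rw [← exp_log (pow_pos hR m), ← exp_neg, exp_le_exp, log_pow]
  nlinarith [mul_le_mul_of_nonneg_left hsum hθ, m.cast_nonneg (α := ℝ)]

theorem stmt3_general {Ω : Type*} [MeasurableSpace Ω] (μ : Measure Ω) [IsProbabilityMeasure μ]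
    (R B : ℝ) (hR : 1 < R)
    (σ : Ω → ℕ) (hσmeas : Measurable σ)
    (hmom : ∫⁻ ω, ENNReal.ofReal (R ^ σ ω) ∂μ ≤ ENNReal.ofReal B)
    (θ M : ℝ) (hθ : 0 < θ) (hsmall : 3 * θ * M ≤ Real.log R)
    (Y : ℕ → Ω → ℝ) (hY : ∀ t ω, |Y t ω| ≤ M)
    (Λ : ℝ) (hΛ : |Λ| ≤ M) :
    ENNReal.ofReal (1 / (R * B)) ≤
      ∫⁻ ω, ENNReal.ofReal
        (Real.exp (θ * ∑ t ∈ Finset.range (σ ω + 1), (Y t ω - Λ))) ∂μ := by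
  have hR0 : 0 < R := one_pos.trans hR
  have hM : 0 ≤ M := (abs_nonneg Λ).trans hΛ
  have hθM : θ * (2 * M) ≤ log R := by nlinarith
  have hincr : ∀ ω t, -(2 * M) ≤ Y t ω - Λ := fun ω t ↦ by
    linarith [(abs_le.1 (hY t ω)).1, (abs_le.1 hΛ).2]
  have hRσ : Measurable fun ω ↦ ENNReal.ofReal (R ^ σ ω) :=
    (measurable_const.pow hσmeas).ennreal_ofReal
  calc ENNReal.ofReal (1 / (R * B))
      ≤ ENNReal.ofReal R⁻¹ * (ENNReal.ofReal B)⁻¹ := by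
        rw [one_div, mul_inv, ENNReal.ofReal_mul (by positivity)]
        gcongr
        exact ENNReal.ofReal_inv_le
    _ ≤ ENNReal.ofReal R⁻¹ * (∫⁻ ω, ENNReal.ofReal (R ^ σ ω) ∂μ)⁻¹ := by gcongr
    _ ≤ ENNReal.ofReal R⁻¹ * ∫⁻ ω, (ENNReal.ofReal (R ^ σ ω))⁻¹ ∂μ := by
        gcongr
        refine ENNReal.inv_lintegral_le_lintegral_inv hRσ.aemeasurable ?_ ?_ <;>
          filter_upwards with ω
        exacts [(ENNReal.ofReal_pos.2 (pow_pos hR0 _)).ne', ENNReal.ofReal_ne_top]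
    _ = ∫⁻ ω, ENNReal.ofReal (R ^ (σ ω + 1))⁻¹ ∂μ := by
        rw [← lintegral_const_mul' _ _ ENNReal.ofReal_ne_top]
        congr with ω
        rw [← ENNReal.ofReal_inv_of_pos (pow_pos hR0 _), ← ENNReal.ofReal_mul (by positivity),
          ← mul_inv, pow_succ']
    _ ≤ _ := lintegral_mono fun ω ↦ ENNReal.ofReal_le_ofReal <|
        inv_pow_le_exp_mul_sum hR0 hθ.le hθM (hincr ω) _

/-- Lower bound of Lemma `relvalfnbndlem`: under `E[R^σ] ≤ B`, `3θM ≤ log R`,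
`|Y_t| ≤ M`, `|Λ| ≤ M`, one has `E[exp(θ ∑_{t=0}^{σ} (Y_t − Λ))] ≥ 1/(R·B)`. -/
theorem stmt3 {Ω : Type*} [MeasurableSpace Ω] (μ : Measure Ω) [IsProbabilityMeasure μ]
    (R B : ℝ) (hR : 1 < R) (hB : 1 ≤ B)
    (σ : Ω → ℕ) (hσmeas : Measurable σ)
    (hmom : ∫⁻ ω, ENNReal.ofReal (R ^ σ ω) ∂μ ≤ ENNReal.ofReal B)
    (θ M : ℝ) (hθ : 0 < θ) (hM : 0 < M) (hsmall : 3 * θ * M ≤ Real.log R)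
    (Y : ℕ → Ω → ℝ) (hYmeas : ∀ t, Measurable (Y t)) (hY : ∀ t ω, |Y t ω| ≤ M)
    (Λ : ℝ) (hΛ : |Λ| ≤ M) :
    ENNReal.ofReal (1 / (R * B)) ≤
      ∫⁻ ω, ENNReal.ofReal
        (Real.exp (θ * ∑ t ∈ Finset.range (σ ω + 1), (Y t ω - Λ))) ∂μ :=
  stmt3_general μ R B hR σ hσmeas hmom θ M hθ hsmall Y hY Λ hΛ
end

section
/- Let X be a countable set, P a Markov kernel on X, and suppose there exist η < 1, b < ∞, a finite set C ⊆ X, and a bounded function V : X → [1, ∞) such that ∑_j V(j) P(j|i) ≤ η V(i) + b·1_C(i) for all i ∈ X. Then for the Markov chain (X_t) with kernel P and any starting state k, the first return time σ_C = inf{t ≥ 1 : X_t ∈ C} satisfies E_k[R^{σ_C}] ≤ V(k)/η + b/(η(1−η)) · R for R = 1/η. In particular E_k[R^{σ_C}] < ∞ for some R > 1. -/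
open MeasureTheory
open scoped ENNReal

/-- A probability vector on a countable state space. -/
def IsProbVec {X : Type*} (π : X → ℝ) : Prop := (∀ j, 0 ≤ π j) ∧ HasSum π 1

/-- A Markov kernel on a countable state space. -/
def IsMarkovKer {X : Type*} (P : X → X → ℝ) : Prop := ∀ i, IsProbVec (P i)

/-- The process `Xp` is a Markov chain with kernel `P` under `μ`: finite-dimensional
distributions factor through `P`. -/
def IsMarkovChain {Ω X : Type*} [MeasurableSpace Ω] (μ : Measure Ω)
    (Xp : ℕ → Ω → X) (P : X → X → ℝ) : Prop :=
  ∀ (t : ℕ) (path : Fin (t + 1) → X) (y : X),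
    (μ {ω | (∀ i : Fin (t + 1), Xp i ω = path i) ∧ Xp (t + 1) ω = y}).toReal =
      (μ {ω | ∀ i : Fin (t + 1), Xp i ω = path i}).toReal * P (path (Fin.last t)) y

/-- First return time of the process to the set `C` (`⊤` if it never returns). -/
noncomputable def retTime {Ω X : Type*} (Xp : ℕ → Ω → X) (C : Set X) (ω : Ω) : ℕ∞ :=
  sInf {t : ℕ∞ | ∃ n : ℕ, t = n ∧ 1 ≤ n ∧ Xp n ω ∈ C}

/-- `R^t` for an extended-natural exponent, with value `⊤` when `t = ⊤`. -/
noncomputable def epow (R : ℝ≥0∞) (t : ℕ∞) : ℝ≥0∞ :=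
  if t = ⊤ then ⊤ else R ^ t.toNat

open Filter Topology

/-!
Write `σ` for the return time to `C` and `R = 1/η`. Outside `C` the drift inequality reads
`E[V(X_{t+1}) | X_t] ≤ η V(X_t)`, so for `t ≥ 1`
`E[V(X_{t+1}); σ > t+1] + E[V(X_{t+1}); σ = t+1] ≤ η E[V(X_t); σ > t]`, while the first step
costs at most `η V(k) + b`. Multiplying by `R^{t+1}` and telescoping gives
`R^T E[V(X_T); σ > T] + ∑_{t ≤ T} R^t E[V(X_t); σ = t] ≤ V(k) + R b`. As `V ≥ 1`, this bounds
`∑_t R^t P(σ = t)` and forces `P(σ > T) ≤ η^T (V(k) + R b) → 0`, whence `E[R^σ] ≤ V(k) + b/η`.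
The Markov property enters only through sums over the countably many paths `(X_0, …, X_t)`.
-/

theorem lintegral_comp_eq_tsum {Ω β : Type*} [MeasurableSpace Ω] [MeasurableSpace β]
    [Countable β] [MeasurableSingletonClass β] {μ : Measure Ω} {Y : Ω → β} (hY : Measurable Y)
    (H : β → ℝ≥0∞) : ∫⁻ ω, H (Y ω) ∂μ = ∑' y, H y * μ (Y ⁻¹' {y}) := by
  rw [← lintegral_map .of_discrete hY, lintegral_countable']
  simp_rw [Measure.map_apply hY (measurableSet_singleton _)]

theorem IsMarkovKer.tsum_ofReal_mul_eq {X : Type*} {P : X → X → ℝ} (hP : IsMarkovKer P)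
    {V : X → ℝ} (hV0 : ∀ x, 0 ≤ V x) (hVbdd : ∃ c, ∀ x, V x ≤ c) (i : X) :
    ∑' y, ENNReal.ofReal (P i y) * ENNReal.ofReal (V y) = ENNReal.ofReal (∑' y, V y * P i y) := by
  obtain ⟨c, hc⟩ := hVbdd
  have hnn : ∀ y, 0 ≤ V y * P i y := fun y => mul_nonneg (hV0 y) ((hP i).1 y)
  have hsumm : Summable fun y => V y * P i y :=
    .of_nonneg_of_le hnn (fun y => mul_le_mul_of_nonneg_right (hc y) ((hP i).1 y))
      ((hP i).2.summable.mul_left c)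
  rw [ENNReal.ofReal_tsum_of_nonneg hnn hsumm]
  exact tsum_congr fun y => by rw [ENNReal.ofReal_mul (hV0 y), mul_comm]

theorem lintegral_epow_le_tsum {Ω : Type*} [MeasurableSpace Ω] {μ : Measure Ω} {τ : Ω → ℕ∞}
    (hτ : ∀ n : ℕ, MeasurableSet {ω | τ ω = n}) (hfin : ∀ᵐ ω ∂μ, τ ω ≠ ⊤) (R : ℝ≥0∞) :
    ∫⁻ ω, epow R (τ ω) ∂μ ≤ ∑' n : ℕ, R ^ n * μ {ω | τ ω = n} := by
  calc ∫⁻ ω, epow R (τ ω) ∂μ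
      ≤ ∫⁻ ω, ∑' n : ℕ, {ω | τ ω = n}.indicator (fun _ => R ^ n) ω ∂μ := by
        refine lintegral_mono_ae (hfin.mono fun ω hω => ?_)
        obtain ⟨m, hm⟩ := ENat.ne_top_iff_exists.1 hω
        refine le_trans ?_ (ENNReal.le_tsum m)
        simp [epow, ← hm]
    _ = ∑' n : ℕ, R ^ n * μ {ω | τ ω = n} := by
        rw [lintegral_tsum fun n => (measurable_const.indicator (hτ n)).aemeasurable]
        simp_rw [lintegral_indicator_const (hτ _)]

theorem measure_le_setLIntegral_ofReal {Ω : Type*} [MeasurableSpace Ω] {μ : Measure Ω}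
    {g : Ω → ℝ} (hg : ∀ ω, 1 ≤ g ω) (S : Set Ω) :
    μ S ≤ ∫⁻ ω in S, ENNReal.ofReal (g ω) ∂μ :=
  (setLIntegral_one S).symm.trans_le (lintegral_mono fun ω => ENNReal.one_le_ofReal.2 (hg ω))

section MarkovChain

variable {Ω X : Type*} [MeasurableSpace Ω] {μ : Measure Ω} {Xp : ℕ → Ω → X} {P : X → X → ℝ}

def pathUpTo (Xp : ℕ → Ω → X) (t : ℕ) (ω : Ω) : Fin (t + 1) → X := fun i => Xp i ω

theorem measurable_pathUpTo [MeasurableSpace X] (hXmeas : ∀ t, Measurable (Xp t)) (t : ℕ) :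
    Measurable (pathUpTo Xp t) :=
  measurable_pi_lambda _ fun i => hXmeas i

theorem IsMarkovChain.measure_pathUpTo_snoc [IsFiniteMeasure μ] (hchain : IsMarkovChain μ Xp P)
    (t : ℕ) (p : Fin (t + 1) → X) (y : X) :
    μ (pathUpTo Xp (t + 1) ⁻¹' {Fin.snoc p y}) =
      μ (pathUpTo Xp t ⁻¹' {p}) * ENNReal.ofReal (P (p (Fin.last t)) y) := by
  have hcyl : ∀ (n : ℕ) (q : Fin (n + 1) → X),
      pathUpTo Xp n ⁻¹' {q} = {ω | ∀ i : Fin (n + 1), Xp i ω = q i} := fun n q => by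
    ext ω
    simp [pathUpTo, funext_iff]
  have hsnoc : pathUpTo Xp (t + 1) ⁻¹' {Fin.snoc p y} =
      {ω | (∀ i : Fin (t + 1), Xp i ω = p i) ∧ Xp (t + 1) ω = y} := by
    rw [hcyl]
    ext ω
    simp [Fin.forall_fin_succ', Fin.snoc_castSucc, Fin.snoc_last]
  rw [hsnoc, hcyl, ← ENNReal.ofReal_toReal (measure_ne_top μ _), hchain t p y,
    ENNReal.ofReal_mul ENNReal.toReal_nonneg, ENNReal.ofReal_toReal (measure_ne_top μ _)]

theorem IsMarkovChain.lintegral_mul_succ [MeasurableSpace X] [MeasurableSingletonClass X]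
    [Countable X] [IsFiniteMeasure μ] (hchain : IsMarkovChain μ Xp P)
    (hXmeas : ∀ t, Measurable (Xp t)) (t : ℕ) (F : (Fin (t + 1) → X) → ℝ≥0∞) (g : X → ℝ≥0∞) :
    ∫⁻ ω, F (pathUpTo Xp t ω) * g (Xp (t + 1) ω) ∂μ =
      ∫⁻ ω, F (pathUpTo Xp t ω) * ∑' y, ENNReal.ofReal (P (Xp t ω) y) * g y ∂μ := by
  calc ∫⁻ ω, F (pathUpTo Xp t ω) * g (Xp (t + 1) ω) ∂μ
      = ∑' q, F (Fin.init q) * g (q (Fin.last (t + 1))) * μ (pathUpTo Xp (t + 1) ⁻¹' {q}) :=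
        lintegral_comp_eq_tsum (measurable_pathUpTo hXmeas _)
          fun q => F (Fin.init q) * g (q (Fin.last (t + 1)))
    _ = ∑' p, F p * (∑' y, ENNReal.ofReal (P (p (Fin.last t)) y) * g y) *
          μ (pathUpTo Xp t ⁻¹' {p}) := by
        rw [← (Fin.snocEquiv fun _ => X).tsum_eq, ENNReal.tsum_prod', ENNReal.tsum_comm]
        refine tsum_congr fun p => ?_
        simp only [← ENNReal.tsum_mul_left, ← ENNReal.tsum_mul_right]
        refine tsum_congr fun y => ?_
        rw [show (Fin.snocEquiv fun _ => X) (y, p) = Fin.snoc p y from rfl, Fin.init_snoc,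
          Fin.snoc_last, hchain.measure_pathUpTo_snoc]
        ring
    _ = _ := (lintegral_comp_eq_tsum (measurable_pathUpTo hXmeas _)
          fun p => F p * ∑' y, ENNReal.ofReal (P (p (Fin.last t)) y) * g y).symm

theorem IsMarkovChain.setLIntegral_preimage_pathUpTo_succ [MeasurableSpace X]
    [MeasurableSingletonClass X] [Countable X] [IsFiniteMeasure μ] (hchain : IsMarkovChain μ Xp P)
    (hXmeas : ∀ t, Measurable (Xp t)) (t : ℕ) (G : Set (Fin (t + 1) → X)) (g : X → ℝ≥0∞) :
    ∫⁻ ω in pathUpTo Xp t ⁻¹' G, g (Xp (t + 1) ω) ∂μ =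
      ∫⁻ ω in pathUpTo Xp t ⁻¹' G, ∑' y, ENNReal.ofReal (P (Xp t ω) y) * g y ∂μ := by
  have hG : MeasurableSet (pathUpTo Xp t ⁻¹' G) := measurable_pathUpTo hXmeas t .of_discrete
  have hind : ∀ f : Ω → ℝ≥0∞, (pathUpTo Xp t ⁻¹' G).indicator f =
      fun ω => G.indicator 1 (pathUpTo Xp t ω) * f ω := fun f => funext fun ω => by
    by_cases h : pathUpTo Xp t ω ∈ G <;> simp [h]
  rw [← lintegral_indicator hG, ← lintegral_indicator hG, hind, hind]
  exact hchain.lintegral_mul_succ hXmeas t _ g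

end MarkovChain

section ReturnTime

variable {Ω X : Type*} {Xp : ℕ → Ω → X} {C : Set X}

def avoidUntil (Xp : ℕ → Ω → X) (C : Set X) (t : ℕ) : Set Ω :=
  {ω | ∀ n, 1 ≤ n → n ≤ t → Xp n ω ∉ C}

theorem avoidUntil_zero : avoidUntil Xp C 0 = Set.univ :=
  Set.eq_univ_of_forall fun _ n h1 h0 => absurd (h1.trans h0) (by omega)

theorem avoidUntil_succ (t : ℕ) :
    avoidUntil Xp C (t + 1) = avoidUntil Xp C t ∩ {ω | Xp (t + 1) ω ∉ C} := by
  ext ω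
  simp only [avoidUntil, Set.mem_inter_iff, Set.mem_ofPred_eq]
  refine ⟨fun h => ⟨fun n h1 hn => h n h1 (by omega), h _ (by omega) le_rfl⟩, ?_⟩
  rintro ⟨h, hlast⟩ n h1 hn
  rcases Nat.lt_or_eq_of_le hn with hn | rfl
  exacts [h n h1 (by omega), hlast]

theorem avoidUntil_eq_preimage (t : ℕ) :
    avoidUntil Xp C t = pathUpTo Xp t ⁻¹' {p | ∀ i : Fin (t + 1), 1 ≤ (i : ℕ) → p i ∉ C} := by
  ext ω
  simp only [avoidUntil, pathUpTo, Set.mem_ofPred_eq, Set.mem_preimage, Fin.forall_iff]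
  exact forall_congr' fun n => ⟨fun h hn h1 => h h1 (by omega), fun h h1 hn => h (by omega) h1⟩

theorem measurableSet_avoidUntil [MeasurableSpace Ω] [MeasurableSpace X]
    [MeasurableSingletonClass X] [Countable X] (hXmeas : ∀ t, Measurable (Xp t)) (t : ℕ) :
    MeasurableSet (avoidUntil Xp C t) := by
  rw [avoidUntil_eq_preimage]
  exact measurable_pathUpTo hXmeas t .of_discrete

theorem lt_retTime_iff (n : ℕ) (ω : Ω) : (n : ℕ∞) < retTime Xp C ω ↔ ω ∈ avoidUntil Xp C n := by
  rw [← ENat.add_one_le_iff (ENat.natCast_ne_top n), retTime, le_sInf_iff]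
  simp only [Set.mem_ofPred_eq, avoidUntil, forall_exists_index, and_imp]
  refine ⟨fun h m h1 hm hC => ?_, fun h _ m hm h1 hC => ?_⟩
  · have : n + 1 ≤ m := by exact_mod_cast h _ m rfl h1 hC
    omega
  · subst hm
    by_contra hlt
    have : ¬ n + 1 ≤ m := by exact_mod_cast hlt
    exact h m h1 (by omega) hC

theorem retTime_eq_succ (t : ℕ) :
    {ω | retTime Xp C ω = ((t + 1 : ℕ) : ℕ∞)} = avoidUntil Xp C t \ avoidUntil Xp C (t + 1) := by
  ext ω
  simp only [Set.mem_ofPred_eq, Set.mem_sdiff, ← lt_retTime_iff, not_lt]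
  constructor
  · intro h
    rw [h]
    exact ⟨by exact_mod_cast t.lt_succ_self, le_rfl⟩
  · rintro ⟨h1, h2⟩
    refine le_antisymm h2 ?_
    rwa [← ENat.add_one_le_iff (ENat.natCast_ne_top t)] at h1

theorem retTime_eq_zero_eq_empty : {ω | retTime Xp C ω = ((0 : ℕ) : ℕ∞)} = ∅ :=
  Set.eq_empty_of_forall_notMem fun ω h =>
    ((lt_retTime_iff 0 ω).2 (avoidUntil_zero ▸ Set.mem_univ ω)).ne' h

theorem measurableSet_retTime_eq [MeasurableSpace Ω] [MeasurableSpace X]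
    [MeasurableSingletonClass X] [Countable X] (hXmeas : ∀ t, Measurable (Xp t)) (n : ℕ) :
    MeasurableSet {ω | retTime Xp C ω = n} := by
  cases n with
  | zero => rw [retTime_eq_zero_eq_empty]; exact .empty
  | succ t =>
    rw [retTime_eq_succ]
    exact (measurableSet_avoidUntil hXmeas t).diff (measurableSet_avoidUntil hXmeas (t + 1))

end ReturnTime

section Drift

variable {Ω X : Type*} [MeasurableSpace Ω] {μ : Measure Ω} {Xp : ℕ → Ω → X} {C : Set X}
  {V : X → ℝ}

/-- `E[V(X_t); σ_C > t]`. -/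
noncomputable def lyapunovBeforeReturn (μ : Measure Ω) (Xp : ℕ → Ω → X) (C : Set X) (V : X → ℝ)
    (t : ℕ) : ℝ≥0∞ :=
  ∫⁻ ω in avoidUntil Xp C t, ENNReal.ofReal (V (Xp t ω)) ∂μ

/-- `E[V(X_{t+1}); σ_C = t + 1]`. -/
noncomputable def lyapunovAtReturn (μ : Measure Ω) (Xp : ℕ → Ω → X) (C : Set X) (V : X → ℝ)
    (t : ℕ) : ℝ≥0∞ :=
  ∫⁻ ω in avoidUntil Xp C t \ avoidUntil Xp C (t + 1), ENNReal.ofReal (V (Xp (t + 1) ω)) ∂μ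

structure IsGeometricDrift (P : X → X → ℝ) (V : X → ℝ) (C : Set X) (η b : ℝ) : Prop where
  one_le : ∀ x, 1 ≤ V x
  bddAbove : ∃ c, ∀ x, V x ≤ c
  drift : ∀ i, ∑' j, V j * P i j ≤ η * V i + b * C.indicator (fun _ => 1) i

variable [MeasurableSpace X] [MeasurableSingletonClass X] [Countable X] [IsProbabilityMeasure μ]
  {P : X → X → ℝ} {η b : ℝ}

theorem lyapunovBeforeReturn_succ_add_lyapunovAtReturn_le (hP : IsMarkovKer P)
    (hchain : IsMarkovChain μ Xp P) (hXmeas : ∀ t, Measurable (Xp t)) (hV0 : ∀ x, 0 ≤ V x)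
    (hVbdd : ∃ c, ∀ x, V x ≤ c) {D : X → ℝ} (hdrift : ∀ i, ∑' j, V j * P i j ≤ D i) (t : ℕ) :
    lyapunovBeforeReturn μ Xp C V (t + 1) + lyapunovAtReturn μ Xp C V t ≤
      ∫⁻ ω in avoidUntil Xp C t, ENNReal.ofReal (D (Xp t ω)) ∂μ := by
  have hsub : avoidUntil Xp C (t + 1) ⊆ avoidUntil Xp C t := by
    rw [avoidUntil_succ]
    exact Set.inter_subset_left
  have hsplit := lintegral_inter_add_sdiff (μ := μ) (fun ω => ENNReal.ofReal (V (Xp (t + 1) ω)))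
    (avoidUntil Xp C t) (measurableSet_avoidUntil (C := C) hXmeas (t + 1))
  rw [Set.inter_eq_right.2 hsub] at hsplit
  rw [lyapunovBeforeReturn, lyapunovAtReturn, hsplit, avoidUntil_eq_preimage,
    hchain.setLIntegral_preimage_pathUpTo_succ hXmeas t _ fun y => ENNReal.ofReal (V y)]
  exact lintegral_mono fun ω => (hP.tsum_ofReal_mul_eq hV0 hVbdd _).trans_le
    (ENNReal.ofReal_le_ofReal (hdrift _))

namespace IsGeometricDrift

theorem lyapunovBeforeReturn_one_add_le (hV : IsGeometricDrift P V C η b) (hη0 : 0 ≤ η)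
    (hP : IsMarkovKer P) (hchain : IsMarkovChain μ Xp P) (hXmeas : ∀ t, Measurable (Xp t))
    {k : X} (hstart : ∀ ω, Xp 0 ω = k) :
    lyapunovBeforeReturn μ Xp C V 1 + lyapunovAtReturn μ Xp C V 0 ≤
      ENNReal.ofReal η * ENNReal.ofReal (V k) + ENNReal.ofReal b := by
  refine (lyapunovBeforeReturn_succ_add_lyapunovAtReturn_le hP hchain hXmeas
    (fun x => zero_le_one.trans (hV.one_le x)) hV.bddAbove hV.drift 0).trans ?_
  rw [avoidUntil_zero, Measure.restrict_univ]
  simp only [hstart, lintegral_const, measure_univ, mul_one, ← ENNReal.ofReal_mul hη0]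
  refine ENNReal.ofReal_add_le.trans (add_le_add_right ?_ _)
  by_cases hk : k ∈ C <;> simp [hk]

theorem lyapunovBeforeReturn_succ_succ_add_le (hV : IsGeometricDrift P V C η b) (hη0 : 0 ≤ η)
    (hP : IsMarkovKer P) (hchain : IsMarkovChain μ Xp P) (hXmeas : ∀ t, Measurable (Xp t))
    (t : ℕ) :
    lyapunovBeforeReturn μ Xp C V (t + 2) + lyapunovAtReturn μ Xp C V (t + 1) ≤
      ENNReal.ofReal η * lyapunovBeforeReturn μ Xp C V (t + 1) := by
  refine (lyapunovBeforeReturn_succ_add_lyapunovAtReturn_le hP hchain hXmeas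
    (fun x => zero_le_one.trans (hV.one_le x)) hV.bddAbove hV.drift (t + 1)).trans_eq ?_
  rw [lyapunovBeforeReturn, ← lintegral_const_mul' _ _ ENNReal.ofReal_ne_top]
  refine setLIntegral_congr_fun (measurableSet_avoidUntil hXmeas _) fun ω hω => ?_
  rw [Set.indicator_of_notMem (hω (t + 1) (by omega) le_rfl), mul_zero, add_zero,
    ENNReal.ofReal_mul hη0]

theorem pow_mul_lyapunovBeforeReturn_add_sum_le (hV : IsGeometricDrift P V C η b) (hη0 : 0 ≤ η)
    (hP : IsMarkovKer P) (hchain : IsMarkovChain μ Xp P) (hXmeas : ∀ t, Measurable (Xp t))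
    {k : X} (hstart : ∀ ω, Xp 0 ω = k) {R : ℝ≥0∞} (hR : R * ENNReal.ofReal η ≤ 1) (T : ℕ) :
    R ^ (T + 1) * lyapunovBeforeReturn μ Xp C V (T + 1) +
        ∑ t ∈ Finset.range (T + 1), R ^ (t + 1) * lyapunovAtReturn μ Xp C V t ≤
      ENNReal.ofReal (V k) + R * ENNReal.ofReal b := by
  induction T with
  | zero =>
    rw [zero_add, pow_one, Finset.sum_range_one, pow_one, ← mul_add]
    calc R * (lyapunovBeforeReturn μ Xp C V 1 + lyapunovAtReturn μ Xp C V 0)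
        ≤ R * (ENNReal.ofReal η * ENNReal.ofReal (V k) + ENNReal.ofReal b) :=
          mul_le_mul_right (hV.lyapunovBeforeReturn_one_add_le hη0 hP hchain hXmeas hstart) R
      _ = R * ENNReal.ofReal η * ENNReal.ofReal (V k) + R * ENNReal.ofReal b := by ring
      _ ≤ ENNReal.ofReal (V k) + R * ENNReal.ofReal b := by
          gcongr
          exact mul_le_of_le_one_left' hR
  | succ T ih =>
    rw [Finset.sum_range_succ]
    calc R ^ (T + 2) * lyapunovBeforeReturn μ Xp C V (T + 2) +
          (∑ t ∈ Finset.range (T + 1), R ^ (t + 1) * lyapunovAtReturn μ Xp C V t +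
            R ^ (T + 2) * lyapunovAtReturn μ Xp C V (T + 1))
        = R ^ (T + 2) * (lyapunovBeforeReturn μ Xp C V (T + 2) +
            lyapunovAtReturn μ Xp C V (T + 1)) +
          ∑ t ∈ Finset.range (T + 1), R ^ (t + 1) * lyapunovAtReturn μ Xp C V t := by ring
      _ ≤ R ^ (T + 1) * (R * ENNReal.ofReal η * lyapunovBeforeReturn μ Xp C V (T + 1)) +
          ∑ t ∈ Finset.range (T + 1), R ^ (t + 1) * lyapunovAtReturn μ Xp C V t := by
          rw [pow_succ, mul_assoc, mul_assoc R]
          gcongr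
          exact hV.lyapunovBeforeReturn_succ_succ_add_le hη0 hP hchain hXmeas T
      _ ≤ R ^ (T + 1) * lyapunovBeforeReturn μ Xp C V (T + 1) +
          ∑ t ∈ Finset.range (T + 1), R ^ (t + 1) * lyapunovAtReturn μ Xp C V t := by
          gcongr
          exact mul_le_of_le_one_left' hR
      _ ≤ _ := ih

theorem ae_retTime_ne_top (hV : IsGeometricDrift P V C η b) (hη0 : 0 < η) (hη1 : η < 1)
    (hP : IsMarkovKer P) (hchain : IsMarkovChain μ Xp P) (hXmeas : ∀ t, Measurable (Xp t))
    {k : X} (hstart : ∀ ω, Xp 0 ω = k) :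
    ∀ᵐ ω ∂μ, retTime Xp C ω ≠ ⊤ := by
  set R := ENNReal.ofReal (1 / η)
  set K := ENNReal.ofReal (V k) + R * ENNReal.ofReal b
  have hRη : R * ENNReal.ofReal η = 1 := by
    rw [← ENNReal.ofReal_mul (by positivity), one_div_mul_cancel hη0.ne', ENNReal.ofReal_one]
  have hbound : ∀ T : ℕ, μ {ω | retTime Xp C ω = ⊤} ≤ ENNReal.ofReal η ^ (T + 1) * K := fun T =>
    calc μ {ω | retTime Xp C ω = ⊤}
        ≤ μ (avoidUntil Xp C (T + 1)) := measure_mono fun ω hω =>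
          (lt_retTime_iff _ ω).1 (hω ▸ ENat.natCast_lt_top _)
      _ ≤ lyapunovBeforeReturn μ Xp C V (T + 1) :=
          measure_le_setLIntegral_ofReal (fun _ => hV.one_le _) _
      _ = ENNReal.ofReal η ^ (T + 1) * (R ^ (T + 1) * lyapunovBeforeReturn μ Xp C V (T + 1)) := by
          rw [← mul_assoc, ← mul_pow, mul_comm _ R, hRη, one_pow, one_mul]
      _ ≤ ENNReal.ofReal η ^ (T + 1) * K := mul_le_mul_right (le_self_add.trans
          (hV.pow_mul_lyapunovBeforeReturn_add_sum_le hη0.le hP hchain hXmeas hstart hRη.le T)) _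
  have hlim : Tendsto (fun T : ℕ => ENNReal.ofReal η ^ (T + 1) * K) atTop (𝓝 0) := by
    have hη : ENNReal.ofReal η < 1 := ENNReal.ofReal_lt_one.2 hη1
    simpa using ENNReal.Tendsto.mul_const
      ((ENNReal.tendsto_pow_atTop_nhds_zero_of_lt_one hη).comp (tendsto_add_atTop_nat 1))
      (Or.inr (by finiteness))
  exact ae_iff.2 (by simpa using le_antisymm (ge_of_tendsto' hlim hbound) zero_le)

theorem lintegral_epow_retTime_le (hV : IsGeometricDrift P V C η b) (hη0 : 0 < η) (hη1 : η < 1)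
    (hP : IsMarkovKer P) (hchain : IsMarkovChain μ Xp P) (hXmeas : ∀ t, Measurable (Xp t))
    {k : X} (hstart : ∀ ω, Xp 0 ω = k) :
    ∫⁻ ω, epow (ENNReal.ofReal (1 / η)) (retTime Xp C ω) ∂μ ≤
      ENNReal.ofReal (V k) + ENNReal.ofReal (1 / η) * ENNReal.ofReal b := by
  set R := ENNReal.ofReal (1 / η)
  have hRη : R * ENNReal.ofReal η ≤ 1 := by
    rw [← ENNReal.ofReal_mul (by positivity), one_div_mul_cancel hη0.ne', ENNReal.ofReal_one]
  calc ∫⁻ ω, epow R (retTime Xp C ω) ∂μ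
      ≤ ∑' n : ℕ, R ^ n * μ {ω | retTime Xp C ω = n} :=
        lintegral_epow_le_tsum (measurableSet_retTime_eq hXmeas)
          (hV.ae_retTime_ne_top hη0 hη1 hP hchain hXmeas hstart) R
    _ = ∑' t : ℕ, R ^ (t + 1) * μ {ω | retTime Xp C ω = ((t + 1 : ℕ) : ℕ∞)} := by
        rw [tsum_eq_zero_add' ENNReal.summable, retTime_eq_zero_eq_empty, measure_empty,
          mul_zero, zero_add]
    _ ≤ ∑' t : ℕ, R ^ (t + 1) * lyapunovAtReturn μ Xp C V t := by
        refine ENNReal.tsum_le_tsum fun t => mul_le_mul_right ?_ _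
        rw [retTime_eq_succ]
        exact measure_le_setLIntegral_ofReal (fun _ => hV.one_le _) _
    _ ≤ ENNReal.ofReal (V k) + R * ENNReal.ofReal b := by
        refine ENNReal.tsum_le_of_sum_range_le fun T => ?_
        cases T with
        | zero => simp
        | succ T =>
          exact le_add_self.trans
            (hV.pow_mul_lyapunovBeforeReturn_add_sum_le hη0.le hP hchain hXmeas hstart hRη T)

end IsGeometricDrift

end Drift

theorem add_one_div_mul_le {η b v : ℝ} (hη0 : 0 < η) (hη1 : η < 1) (hb : 0 ≤ b) (hv : 0 ≤ v) :
    v + 1 / η * b ≤ v / η + b / (η * (1 - η)) * (1 / η) := by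
  have h1η : 0 < 1 - η := by linarith
  have hv' : v ≤ v / η := le_div_self hv hη0 hη1.le
  have hb' : 1 / η * b ≤ b / (η * (1 - η)) * (1 / η) := by
    rw [div_mul_div_comm, mul_comm (1 / η) b, mul_one_div, div_le_div_iff₀ hη0 (by positivity)]
    nlinarith [mul_nonneg (mul_nonneg hb hη0.le) h1η.le, mul_nonneg hb (pow_pos hη0 3).le]
  linarith

theorem stmt9_general {Ω X : Type*} [MeasurableSpace Ω] [MeasurableSpace X]
    [MeasurableSingletonClass X] [Countable X]
    (μ : Measure Ω) [IsProbabilityMeasure μ]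
    (P : X → X → ℝ) (hP : IsMarkovKer P)
    (η b : ℝ) (hη0 : 0 < η) (hη1 : η < 1) (hb : 0 ≤ b)
    (C : Set X)
    (V : X → ℝ) (hV1 : ∀ k, 1 ≤ V k) (hVbdd : ∃ c : ℝ, ∀ k, V k ≤ c)
    (hdrift : ∀ i, ∑' j, V j * P i j ≤ η * V i + b * C.indicator (fun _ => (1 : ℝ)) i)
    (k : X) (Xp : ℕ → Ω → X) (hXmeas : ∀ t, Measurable (Xp t))
    (hstart : ∀ ω, Xp 0 ω = k)
    (hchain : IsMarkovChain μ Xp P) :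
    (∫⁻ ω, epow (ENNReal.ofReal (1 / η)) (retTime Xp C ω) ∂μ ≤
        ENNReal.ofReal (V k / η + b / (η * (1 - η)) * (1 / η))) ∧
    ∃ R' : ℝ, 1 < R' ∧ ∫⁻ ω, epow (ENNReal.ofReal R') (retTime Xp C ω) ∂μ < ⊤ := by
  have hV : IsGeometricDrift P V C η b := ⟨hV1, hVbdd, hdrift⟩
  have hconst : ENNReal.ofReal (V k) + ENNReal.ofReal (1 / η) * ENNReal.ofReal b ≤
      ENNReal.ofReal (V k / η + b / (η * (1 - η)) * (1 / η)) := by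
    have hVk : 0 ≤ V k := zero_le_one.trans (hV1 k)
    rw [← ENNReal.ofReal_mul (by positivity), ← ENNReal.ofReal_add hVk (by positivity)]
    exact ENNReal.ofReal_le_ofReal (add_one_div_mul_le hη0 hη1 hb hVk)
  have hbound := (hV.lintegral_epow_retTime_le hη0 hη1 hP hchain hXmeas hstart).trans hconst
  exact ⟨hbound, 1 / η, (one_lt_div hη0).2 hη1, hbound.trans_lt ENNReal.ofReal_lt_top⟩

/-- Geometric drift implies geometric recurrence ((c) ⟹ (a) in Prop. `lpstblaprecur`,
cf. Meyn–Tweedie Thm 15.2.5): a Foster–Lyapunov condition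
`∑_j V(j)P(j|i) ≤ η V(i) + b·1_C(i)` with `V : X → [1,∞)` bounded, `C` finite, gives
`E_k[R^{σ_C}] ≤ V(k)/η + b/(η(1−η))·R` for `R = 1/η`; in particular
`E_k[R'^{σ_C}] < ∞` for some `R' > 1`. -/
theorem stmt9 {Ω X : Type*} [MeasurableSpace Ω] [MeasurableSpace X]
    [MeasurableSingletonClass X] [Countable X]
    (μ : Measure Ω) [IsProbabilityMeasure μ]
    (P : X → X → ℝ) (hP : IsMarkovKer P)
    (η b : ℝ) (hη0 : 0 < η) (hη1 : η < 1) (hb : 0 ≤ b)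
    (C : Set X) (hC : C.Finite)
    (V : X → ℝ) (hV1 : ∀ k, 1 ≤ V k) (hVbdd : ∃ c : ℝ, ∀ k, V k ≤ c)
    (hdrift : ∀ i, ∑' j, V j * P i j ≤ η * V i + b * C.indicator (fun _ => (1 : ℝ)) i)
    (k : X) (Xp : ℕ → Ω → X) (hXmeas : ∀ t, Measurable (Xp t))
    (hstart : ∀ ω, Xp 0 ω = k)
    (hchain : IsMarkovChain μ Xp P) :
    (∫⁻ ω, epow (ENNReal.ofReal (1 / η)) (retTime Xp C ω) ∂μ ≤
        ENNReal.ofReal (V k / η + b / (η * (1 - η)) * (1 / η))) ∧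
    ∃ R' : ℝ, 1 < R' ∧ ∫⁻ ω, epow (ENNReal.ofReal R') (retTime Xp C ω) ∂μ < ⊤ :=
  stmt9_general μ P hP η b hη0 hη1 hb C V hV1 hVbdd hdrift k Xp hXmeas hstart hchain
end
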